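/- arXiv:1812.00183 — 2 statements merged into one kernel-verified Lean document; each statement's English description precedes it below -/
import Mathlib

section
/- Counter abstraction is a bisimulation: let A = (S, δ, I, F) be an SPS over Γ₀ = {u₁, …, u_k}, and define the abstraction map π(s, C) = (s, (m₁, …, m_k)) ∈ S × ℕᵏ where m_i = |{a ∈ C | λ(a) = u_i}|. Then (1) if (s, C) →r (s', C') is a configuration transition, then (s, r, s') ∈ δ and π(s', C') is obtained from π(s, C) by incrementing the i-th counter when r = req_{u_i}, decrementing the i-th counter (which is strictly positive) when r = ans_{u_i}, and leaving the counters unchanged when r = τ; and (2) conversely, if (s, r, s') ∈ δ and the counter vector of π(s, C) can perform the corresponding counter update (in particular m_i > 0 when r = ans_{u_i}), then there exists a (unique) finite set C' ⊆ CN with (s, C) →r (s', C'). Consequently, L(A) equals the language of the induced k-counter automaton without zero-tests with state set S, initial states I and final states F. -/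
/-!
Fixed data: a finite service alphabet `T` (= Γ₀) of client types; client names
`CN T = T × ℕ`, where `(u, n)` is the `n`-th client of type `u` (so the typing map
λ is the first projection, each fiber `CN_u` is countably infinite, and the fixed
enumeration of `CN_u` is given by the natural-number index).
-/

/-- The extended alphabet Γ = {req_u, ans_u | u ∈ Γ₀} ∪ {τ}. -/
inductive Act (T : Type) : Type
  | req : T → Act T
  | ans : T → Act T
  | tau : Act T
  deriving DecidableEq

/-- Client names: `(u, n)` is the `n`-th client of type `u`; `λ = Prod.fst`. -/
abbrev CN (T : Type) := T × ℕ

/-- A Service for Passive Clients: a finite set of states `S`, a transition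
relation `δ ⊆ S × Γ × S`, initial states `I` and final states `F`. -/
structure SPS (T S : Type) where
  delta : S → Act T → S → Prop
  init : Set S
  final : Set S

namespace SPS

variable {T S : Type}

/-- The extended transition relation on configurations `(s, C)`:
`(s, C) →r (s', C')` iff `(s, r, s') ∈ δ` and
* if `r = τ` then `C' = C`;
* if `r = req_u` then `C' = C ∪ {a}` where `a` is the least element of `CN_u \ C`;
* if `r = ans_u` then `X = {a ∈ C | λ a = u}` is nonempty and `C' = C \ {a}`
  where `a` is the least element of `X`. -/
def CStep (A : SPS T S) : S × Set (CN T) → Act T → S × Set (CN T) → Prop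
  | (s, C), r, (s', C') =>
    A.delta s r s' ∧
      match r with
      | .tau => C' = C
      | .req u => C' = insert (u, sInf {n : ℕ | (u, n) ∉ C}) C
      | .ans u => {n : ℕ | (u, n) ∈ C}.Nonempty ∧
          C' = C \ {(u, sInf {n : ℕ | (u, n) ∈ C})}

/-- `A.Reaches c w c'` iff there is a run of `A` on the word `w` that starts in the
configuration `c` and ends in the configuration `c'`. -/
inductive Reaches (A : SPS T S) : S × Set (CN T) → List (Act T) → S × Set (CN T) → Prop
  | refl (c) : Reaches A c [] c
  | step {c c' c'' : S × Set (CN T)} {r : Act T} {w : List (Act T)} :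
      A.CStep c r c' → Reaches A c' w c'' → Reaches A c (r :: w) c''

/-- The language of `A`: all words `w ∈ Γ*` on which `A` has a run from an initial
configuration (initial state, empty client set) to a configuration whose state is final. -/
def Lang (A : SPS T S) : Set (List (Act T)) :=
  {w | ∃ s ∈ A.init, ∃ c : S × Set (CN T), A.Reaches (s, ∅) w c ∧ c.1 ∈ A.final}

end SPS


namespace SPS

variable {T S : Type}

/-- The counter abstraction map `π(s, C) = (s, (m_u)_{u ∈ Γ₀})`, where
`m_u = |{a ∈ C | λ a = u}|` (counters are indexed by the finitely many client types). -/
noncomputable def absMap (c : S × Set (CN T)) : S × (T → ℕ) :=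
  (c.1, fun u => {a ∈ c.2 | a.1 = u}.ncard)

/-- A step of the induced multi-counter automaton without zero-tests:
`(s, v) →r (s', v')` iff `(s, r, s') ∈ δ` and `v' = v + e_u` when `r = req_u`,
`v' = v - e_u` with `v u > 0` when `r = ans_u`, and `v' = v` when `r = τ`. -/
def CounterStep [DecidableEq T] (A : SPS T S) :
    S × (T → ℕ) → Act T → S × (T → ℕ) → Prop
  | (s, v), r, (s', v') =>
    A.delta s r s' ∧
      match r with
      | .tau => v' = v
      | .req u => v' = Function.update v u (v u + 1)
      | .ans u => 0 < v u ∧ v' = Function.update v u (v u - 1)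

/-- Multistep of the induced counter automaton. -/
inductive CReaches [DecidableEq T] (A : SPS T S) :
    S × (T → ℕ) → List (Act T) → S × (T → ℕ) → Prop
  | refl (c) : CReaches A c [] c
  | step {c c' c'' : S × (T → ℕ)} {r : Act T} {w : List (Act T)} :
      A.CounterStep c r c' → CReaches A c' w c'' → CReaches A c (r :: w) c''

/-- The language of the induced multi-counter automaton without zero-tests: words
labelling a path from an initial configuration `(s, 0)`, `s ∈ I`, to a configuration
whose state is final. -/
def CounterLang [DecidableEq T] (A : SPS T S) : Set (List (Act T)) :=
  {w | ∃ s ∈ A.init, ∃ c : S × (T → ℕ), A.CReaches (s, fun _ => 0) w c ∧ c.1 ∈ A.final}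

end SPS

/-!
Counter abstraction forgets which clients are pending and keeps only how many of each type
there are. This loses nothing: every `req_u` admits the least fresh name of type `u` (a finite
set of names leaves infinitely many free), and every `ans_u` removes the least pending name of
type `u`, which exists exactly when the `u`-counter is positive. So configuration steps and
counter steps correspond one to one along `absMap`, and runs lift by induction on the word.
-/

namespace SPS

variable {T S : Type}

noncomputable def counts (C : Set (CN T)) (u : T) : ℕ := {a ∈ C | a.1 = u}.ncard

theorem absMap_eq (s : S) (C : Set (CN T)) : absMap (s, C) = (s, counts C) := rfl

@[simp]
theorem counts_empty : counts (∅ : Set (CN T)) = fun _ => 0 := by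
  funext u
  simp [counts]

theorem sInf_fresh_notMem {C : Set (CN T)} (hC : C.Finite) (u : T) :
    (u, sInf {n : ℕ | (u, n) ∉ C}) ∉ C :=
  Nat.sInf_mem (hC.preimage (Prod.mk_right_injective u).injOn).infinite_compl.nonempty

theorem counts_pos_iff {C : Set (CN T)} (hC : C.Finite) (u : T) :
    0 < counts C u ↔ {n : ℕ | (u, n) ∈ C}.Nonempty := by
  rw [counts, Set.ncard_pos (hC.subset (Set.sep_subset _ _))]
  constructor
  · rintro ⟨⟨u', n⟩, hn, rfl⟩
    exact ⟨n, hn⟩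
  · rintro ⟨n, hn⟩
    exact ⟨(u, n), hn, rfl⟩

variable {A : SPS T S} {s s' : S} {C C₁ C₂ : Set (CN T)} {r : Act T}

theorem CStep.finite (hC : C.Finite) (h : A.CStep (s, C) r (s', C₁)) : C₁.Finite := by
  obtain ⟨-, hr⟩ := h
  cases r with
  | tau => exact hr ▸ hC
  | req u => exact hr ▸ hC.insert _
  | ans u => exact hr.2 ▸ hC.sdiff

theorem CStep.right_unique (h₁ : A.CStep (s, C) r (s', C₁)) (h₂ : A.CStep (s, C) r (s', C₂)) :
    C₁ = C₂ := by
  obtain ⟨-, h₁⟩ := h₁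
  obtain ⟨-, h₂⟩ := h₂
  cases r with
  | tau => exact h₁.trans h₂.symm
  | req u => exact h₁.trans h₂.symm
  | ans u => exact h₁.2.trans h₂.2.symm

variable [DecidableEq T]

theorem counts_insert (hC : C.Finite) {x : CN T} (hx : x ∉ C) :
    counts (insert x C) = Function.update (counts C) x.1 (counts C x.1 + 1) := by
  funext u
  rcases eq_or_ne u x.1 with rfl | hu
  · have hsep : {a ∈ insert x C | a.1 = x.1} = insert x {a ∈ C | a.1 = x.1} := by
      ext a; aesop
    rw [Function.update_self, counts, hsep,
      Set.ncard_insert_of_notMem (fun h => hx h.1) (hC.subset (Set.sep_subset _ _))]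
    rfl
  · have hsep : {a ∈ insert x C | a.1 = u} = {a ∈ C | a.1 = u} := by
      ext a; aesop
    rw [Function.update_of_ne hu, counts, hsep, counts]

theorem counts_sdiff_singleton {x : CN T} (hx : x ∈ C) :
    counts (C \ {x}) = Function.update (counts C) x.1 (counts C x.1 - 1) := by
  funext u
  rcases eq_or_ne u x.1 with rfl | hu
  · have hsep : {a ∈ C \ {x} | a.1 = x.1} = {a ∈ C | a.1 = x.1} \ {x} := by
      ext a; aesop
    rw [Function.update_self, counts, hsep,
      Set.ncard_sdiff_singleton_of_mem (show x ∈ {a ∈ C | a.1 = x.1} from ⟨hx, rfl⟩)]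
    rfl
  · have hsep : {a ∈ C \ {x} | a.1 = u} = {a ∈ C | a.1 = u} := by
      ext a; aesop
    rw [Function.update_of_ne hu, counts, hsep, counts]

theorem CStep.counterStep_absMap (hC : C.Finite) (h : A.CStep (s, C) r (s', C₁)) :
    A.CounterStep (absMap (s, C)) r (absMap (s', C₁)) := by
  obtain ⟨hd, hr⟩ := h
  refine ⟨hd, ?_⟩
  cases r with
  | tau => exact congrArg counts hr
  | req u => exact hr ▸ counts_insert hC (sInf_fresh_notMem hC u)
  | ans u =>
    obtain ⟨hne, rfl⟩ := hr
    exact ⟨(counts_pos_iff hC u).2 hne, counts_sdiff_singleton (Nat.sInf_mem hne)⟩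

theorem CounterStep.right_unique {c : S × (T → ℕ)} {v₁ v₂ : T → ℕ}
    (h₁ : A.CounterStep c r (s', v₁)) (h₂ : A.CounterStep c r (s', v₂)) : v₁ = v₂ := by
  obtain ⟨-, h₁⟩ := h₁
  obtain ⟨-, h₂⟩ := h₂
  cases r with
  | tau => exact h₁.trans h₂.symm
  | req u => exact h₁.trans h₂.symm
  | ans u => exact h₁.2.trans h₂.2.symm

theorem exists_cStep_of_counterStep (hC : C.Finite) {v : T → ℕ}
    (h : A.CounterStep (absMap (s, C)) r (s', v)) : ∃ C₁, A.CStep (s, C) r (s', C₁) := by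
  obtain ⟨hd, hr⟩ := h
  cases r with
  | tau => exact ⟨C, hd, rfl⟩
  | req u => exact ⟨_, hd, rfl⟩
  | ans u => exact ⟨_, hd, (counts_pos_iff hC u).1 hr.1, rfl⟩

theorem exists_cStep_absMap_of_counterStep (hC : C.Finite) {v : T → ℕ}
    (h : A.CounterStep (absMap (s, C)) r (s', v)) :
    ∃ C₁, C₁.Finite ∧ A.CStep (s, C) r (s', C₁) ∧ absMap (s', C₁) = (s', v) := by
  obtain ⟨C₁, h₁⟩ := exists_cStep_of_counterStep hC h
  exact ⟨C₁, h₁.finite hC, h₁, congrArg _ ((h₁.counterStep_absMap hC).right_unique h)⟩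

theorem Reaches.cReaches_absMap {c c' : S × Set (CN T)} {w : List (Act T)}
    (h : A.Reaches c w c') (hc : c.2.Finite) : A.CReaches (absMap c) w (absMap c') := by
  induction h with
  | refl => exact .refl _
  | step h₁ _ ih => exact .step (h₁.counterStep_absMap hc) (ih (h₁.finite hc))

theorem CReaches.exists_reaches_absMap {w : List (Act T)} {d : S × (T → ℕ)}
    (h : A.CReaches (absMap (s, C)) w d) (hC : C.Finite) :
    ∃ c', A.Reaches (s, C) w c' ∧ absMap c' = d := by
  induction w generalizing s C with
  | nil => cases h; exact ⟨_, .refl _, rfl⟩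
  | cons r w ih =>
    obtain _ | @⟨_, ⟨s₁, v₁⟩, _, _, _, h₁, h₂⟩ := h
    obtain ⟨C₁, hC₁, hstep, habs⟩ := exists_cStep_absMap_of_counterStep hC h₁
    obtain ⟨c', hc', rfl⟩ := ih (habs ▸ h₂) hC₁
    exact ⟨c', .step hstep hc', rfl⟩

theorem lang_eq_counterLang (A : SPS T S) : A.Lang = A.CounterLang := by
  ext w
  constructor
  · rintro ⟨s, hs, c, hc, hf⟩
    exact ⟨s, hs, absMap c, by simpa [absMap_eq] using hc.cReaches_absMap Set.finite_empty, hf⟩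
  · rintro ⟨s, hs, d, hd, hf⟩
    obtain ⟨c, hc, rfl⟩ :=
      CReaches.exists_reaches_absMap (by simpa [absMap_eq] using hd) Set.finite_empty
    exact ⟨s, hs, c, hc, hf⟩

end SPS

theorem sps_counter_abstraction_general {T S : Type} [DecidableEq T]
    (A : SPS T S) :
    (∀ (s s' : S) (C C' : Set (CN T)) (r : Act T), C.Finite →
        A.CStep (s, C) r (s', C') →
          A.delta s r s' ∧ A.CounterStep (SPS.absMap (s, C)) r (SPS.absMap (s', C'))) ∧
    (∀ (s s' : S) (C : Set (CN T)) (r : Act T), C.Finite →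
        A.delta s r s' →
        (∃ v', A.CounterStep (SPS.absMap (s, C)) r (s', v')) →
        ∃! C' : Set (CN T), A.CStep (s, C) r (s', C')) ∧
    A.Lang = A.CounterLang := by
  refine ⟨fun s s' C C' r hC h => ⟨h.1, h.counterStep_absMap hC⟩, ?_, A.lang_eq_counterLang⟩
  rintro s s' C r hC - ⟨v, hv⟩
  obtain ⟨C₁, h₁⟩ := SPS.exists_cStep_of_counterStep hC hv
  exact ⟨C₁, h₁, fun C₂ h₂ => h₂.right_unique h₁⟩

/-- **Counter abstraction is a bisimulation.**
(1) Every configuration step `(s, C) →r (s', C')` projects under `π = absMap` to a step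
of the induced counter automaton (in particular `(s, r, s') ∈ δ`, and the counters are
updated by incrementing on `req`, decrementing a strictly positive counter on `ans`,
and are unchanged on `τ`); (2) conversely, if `(s, r, s') ∈ δ` and the counter vector
of `π(s, C)` can perform the corresponding counter update, then there is a unique
finite `C'` with `(s, C) →r (s', C')`.  Consequently `L(A)` equals the language of the
induced multi-counter automaton without zero-tests. -/
theorem sps_counter_abstraction {T S : Type} [Fintype T] [DecidableEq T] [Fintype S]
    (A : SPS T S) :
    (∀ (s s' : S) (C C' : Set (CN T)) (r : Act T), C.Finite →
        A.CStep (s, C) r (s', C') →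
          A.delta s r s' ∧ A.CounterStep (SPS.absMap (s, C)) r (SPS.absMap (s', C'))) ∧
    (∀ (s s' : S) (C : Set (CN T)) (r : Act T), C.Finite →
        A.delta s r s' →
        (∃ v', A.CounterStep (SPS.absMap (s, C)) r (s', v')) →
        ∃! C' : Set (CN T), A.CStep (s, C) r (s', C')) ∧
    A.Lang = A.CounterLang :=
  sps_counter_abstraction_general A
end

section
/- Threshold indistinguishability for monadic first-order logic with two unary predicates: let L be the first-order language (with equality) whose signature consists of exactly two unary relation symbols p and q, and let 𝔄 and 𝔅 be two L-structures with nonempty finite domains. For a structure 𝔐, write R₁(𝔐) = {a | p(a) ∧ q(a)}, R₂(𝔐) = {a | p(a) ∧ ¬q(a)}, R₃(𝔐) = {a | ¬p(a) ∧ q(a)}, R₄(𝔐) = {a | ¬p(a) ∧ ¬q(a)} for the four atomic-type regions. If for some r ∈ ℕ and every i ∈ {1,2,3,4} one has min(|R_i(𝔄)|, r) = min(|R_i(𝔅)|, r), then 𝔄 and 𝔅 satisfy exactly the same L-sentences of quantifier rank at most r. -/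
/-
An Ehrenfeucht–Fraïssé argument. Call two tuples `a` in `𝔄` and `b` in `𝔅` `k`-equivalent when
they have the same equality pattern, corresponding entries have the same atomic type, and in each
of the four regions the numbers of elements not among the entries agree up to threshold `k`.
If the tuples are `(k + 1)`-equivalent, every new element `a'` has an answer `b'` keeping them
`k`-equivalent: an old entry `b i` if `a' = a i`, otherwise an unused element of the region of
`a'`, which exists because the counts, being positive, agree below the threshold `k + 1`.
By induction on formulas, `k`-equivalent tuples satisfy the same formulas of quantifier rank at
most `k`; the empty tuples are `r`-equivalent by hypothesis.
-/

open FirstOrder FirstOrder.Language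

/-- The two unary relation symbols `p` and `q`. -/
inductive PQSym : Type
  | p
  | q
  deriving DecidableEq

/-- The first-order language (with equality) whose signature consists of exactly two
unary relation symbols `p` and `q` (and no function symbols). -/
def Lpq : FirstOrder.Language where
  Functions := fun _ => Empty
  Relations := fun n => match n with
    | 1 => PQSym
    | _ => Empty

/-- The `Lpq`-structure on a domain `M` in which `p` is interpreted by `P` and `q`
is interpreted by `Q`. -/
def pqStructure {M : Type*} (P Q : Set M) : Lpq.Structure M where
  funMap := fun {_n} f _ => (f : Empty).elim
  RelMap := fun {n} r x =>
    match n, r with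
    | 1, PQSym.p => x 0 ∈ P
    | 1, PQSym.q => x 0 ∈ Q

/-- The quantifier rank of a (bounded) formula: the maximal nesting depth of
quantifiers occurring in it. -/
def qrank : ∀ {n : ℕ}, Lpq.BoundedFormula Empty n → ℕ
  | _, .falsum => 0
  | _, .equal _ _ => 0
  | _, .rel _ _ => 0
  | _, .imp f g => max (qrank f) (qrank g)
  | _, .all f => qrank f + 1

open Set

section Counting

variable {α β : Type*}

theorem min_encard_sdiff_singleton_eq {X : Set α} {Y : Set β} {x : α} {y : β} {k : ℕ}
    (hxy : x ∈ X ↔ y ∈ Y) (h : min X.encard (k + 1) = min Y.encard (k + 1)) :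
    min (X \ {x}).encard k = min (Y \ {y}).encard k := by
  by_cases hx : x ∈ X
  · rw [← encard_sdiff_singleton_add_one hx, ← encard_sdiff_singleton_add_one (hxy.1 hx),
      min_add_add_right, min_add_add_right] at h
    exact WithTop.add_right_cancel ENat.one_ne_top h
  · rw [sdiff_singleton_eq_self hx, sdiff_singleton_eq_self (hx ∘ hxy.2)]
    have hk : ((k : ℕ∞) ≤ k + 1) := le_self_add
    simpa only [min_assoc, min_eq_right hk] using congrArg (min · (k : ℕ∞)) h

theorem min_encard_eq_of_min_ncard_eq [Finite α] [Finite β] {X : Set α} {Y : Set β} {r : ℕ}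
    (h : min X.ncard r = min Y.ncard r) : min X.encard r = min Y.encard r := by
  rw [← X.toFinite.cast_ncard_eq, ← Y.toFinite.cast_ncard_eq, ← Nat.mono_cast.map_min,
    ← Nat.mono_cast.map_min, h]

end Counting

-- With `s t : Prop`, the four regions `R₁, …, R₄` are `pqRegion P Q s t` for `s, t ∈ {True, False}`.
def pqRegion {M : Type*} (P Q : Set M) (s t : Prop) : Set M :=
  {x | (x ∈ P ↔ s) ∧ (x ∈ Q ↔ t)}

theorem Lpq.term_eq_var_inr {n : ℕ} (t : Lpq.Term (Empty ⊕ Fin n)) :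
    ∃ i, t = Term.var (Sum.inr i) := by
  rcases t with (e | i) | ⟨f, _⟩
  · exact e.elim
  · exact ⟨i, rfl⟩
  · exact (f : Empty).elim

section ThresholdEquiv

variable {A B : Type*} (PA QA : Set A) (PB QB : Set B)

structure ThresholdEquiv (k : ℕ) {n : ℕ} (a : Fin n → A) (b : Fin n → B) : Prop where
  eq_iff : ∀ i j, a i = a j ↔ b i = b j
  mem_P_iff : ∀ i, a i ∈ PA ↔ b i ∈ PB
  mem_Q_iff : ∀ i, a i ∈ QA ↔ b i ∈ QB
  min_encard_eq : ∀ s t : Prop,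
    min (pqRegion PA QA s t \ range a).encard k = min (pqRegion PB QB s t \ range b).encard k

variable {PA QA PB QB}

theorem ThresholdEquiv.symm {k n : ℕ} {a : Fin n → A} {b : Fin n → B}
    (h : ThresholdEquiv PA QA PB QB k a b) : ThresholdEquiv PB QB PA QA k b a where
  eq_iff i j := (h.eq_iff i j).symm
  mem_P_iff i := (h.mem_P_iff i).symm
  mem_Q_iff i := (h.mem_Q_iff i).symm
  min_encard_eq s t := (h.min_encard_eq s t).symm

theorem thresholdEquiv_fin_zero {k : ℕ} (a : Fin 0 → A) (b : Fin 0 → B)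
    (h : ∀ s t : Prop,
      min (pqRegion PA QA s t).encard k = min (pqRegion PB QB s t).encard k) :
    ThresholdEquiv PA QA PB QB k a b where
  eq_iff i := i.elim0
  mem_P_iff i := i.elim0
  mem_Q_iff i := i.elim0
  min_encard_eq s t := by simpa only [range_eq_empty, sdiff_empty] using h s t

theorem ThresholdEquiv.snoc {k n : ℕ} {a : Fin n → A} {b : Fin n → B} {a' : A} {b' : B}
    (h : ThresholdEquiv PA QA PB QB (k + 1) a b) (heq : ∀ i, a' = a i ↔ b' = b i)
    (hP : a' ∈ PA ↔ b' ∈ PB) (hQ : a' ∈ QA ↔ b' ∈ QB) :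
    ThresholdEquiv PA QA PB QB k (Fin.snoc a a') (Fin.snoc b b') where
  eq_iff i j := by
    induction i using Fin.lastCases <;> induction j using Fin.lastCases <;>
      simp only [Fin.snoc_last, Fin.snoc_castSucc, heq, h.eq_iff, iff_self]
    rw [eq_comm, heq, eq_comm]
  mem_P_iff i := by
    induction i using Fin.lastCases <;> simp only [Fin.snoc_last, Fin.snoc_castSucc, hP, h.mem_P_iff]
  mem_Q_iff i := by
    induction i using Fin.lastCases <;> simp only [Fin.snoc_last, Fin.snoc_castSucc, hQ, h.mem_Q_iff]
  min_encard_eq s t := by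
    have hrange : a' ∈ range a ↔ b' ∈ range b := by
      simp only [mem_range, eq_comm (b := a'), eq_comm (b := b'), heq]
    have hregion : a' ∈ pqRegion PA QA s t ↔ b' ∈ pqRegion PB QB s t := by
      change ((a' ∈ PA ↔ s) ∧ (a' ∈ QA ↔ t)) ↔ ((b' ∈ PB ↔ s) ∧ (b' ∈ QB ↔ t))
      rw [hP, hQ]
    rw [Fin.range_snoc, Fin.range_snoc, insert_eq, insert_eq, union_comm {a'}, union_comm {b'},
      ← Set.sdiff_sdiff, ← Set.sdiff_sdiff]
    exact min_encard_sdiff_singleton_eq (and_congr hregion (not_congr hrange))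
      (h.min_encard_eq s t)

theorem ThresholdEquiv.exists_snoc {k n : ℕ} {a : Fin n → A} {b : Fin n → B}
    (h : ThresholdEquiv PA QA PB QB (k + 1) a b) (a' : A) :
    ∃ b', ThresholdEquiv PA QA PB QB k (Fin.snoc a a') (Fin.snoc b b') := by
  by_cases hold : a' ∈ range a
  · obtain ⟨i, rfl⟩ := hold
    exact ⟨b i, h.snoc (fun j => h.eq_iff i j) (h.mem_P_iff i) (h.mem_Q_iff i)⟩
  · have hA : (pqRegion PA QA (a' ∈ PA) (a' ∈ QA) \ range a).Nonempty :=
      ⟨a', ⟨Iff.rfl, Iff.rfl⟩, hold⟩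
    have hB : (pqRegion PB QB (a' ∈ PA) (a' ∈ QA) \ range b).Nonempty := by
      rw [← one_le_encard_iff_nonempty] at hA ⊢
      calc 1 ≤ min (pqRegion PA QA (a' ∈ PA) (a' ∈ QA) \ range a).encard (k + 1) :=
            le_min hA (by simp)
        _ = min (pqRegion PB QB (a' ∈ PA) (a' ∈ QA) \ range b).encard (k + 1) :=
            h.min_encard_eq _ _
        _ ≤ _ := min_le_left _ _
    obtain ⟨b', ⟨hP, hQ⟩, hnew⟩ := hB
    refine ⟨b', h.snoc (fun i => ?_) hP.symm hQ.symm⟩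
    exact iff_of_false (fun hi => hold ⟨i, hi.symm⟩) (fun hi => hnew ⟨i, hi.symm⟩)

theorem ThresholdEquiv.realize_iff {n : ℕ} (φ : Lpq.BoundedFormula Empty n) :
    ∀ {k : ℕ} {a : Fin n → A} {b : Fin n → B}, ThresholdEquiv PA QA PB QB k a b → qrank φ ≤ k →
    ∀ (v : Empty → A) (w : Empty → B),
      (@BoundedFormula.Realize Lpq A (pqStructure PA QA) Empty n φ v a ↔
        @BoundedFormula.Realize Lpq B (pqStructure PB QB) Empty n φ w b) := by
  induction φ with
  | falsum => exact fun _ _ _ _ => Iff.rfl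
  | equal t₁ t₂ =>
    intro k a b h _ v w
    obtain ⟨i, rfl⟩ := Lpq.term_eq_var_inr t₁
    obtain ⟨j, rfl⟩ := Lpq.term_eq_var_inr t₂
    exact h.eq_iff i j
  | @rel _ l R ts =>
    intro k a b h _ v w
    let := pqStructure PA QA
    let := pqStructure PB QB
    match l, R with
    | 0, R | _ + 2, R => exact (R : Empty).elim
    | 1, .p =>
      change (ts 0).realize (Sum.elim v a) ∈ PA ↔ (ts 0).realize (Sum.elim w b) ∈ PB
      obtain ⟨i, hi⟩ := Lpq.term_eq_var_inr (ts 0)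
      rw [hi]
      exact h.mem_P_iff i
    | 1, .q =>
      change (ts 0).realize (Sum.elim v a) ∈ QA ↔ (ts 0).realize (Sum.elim w b) ∈ QB
      obtain ⟨i, hi⟩ := Lpq.term_eq_var_inr (ts 0)
      rw [hi]
      exact h.mem_Q_iff i
  | imp f g ihf ihg =>
    intro k a b h hk v w
    rw [qrank, max_le_iff] at hk
    simp only [BoundedFormula.realize_imp, ihf h hk.1 v w, ihg h hk.2 v w]
  | all f ih =>
    intro k a b h hk v w
    rw [qrank] at hk
    cases k with
    | zero => omega
    | succ k =>
    have hf : qrank f ≤ k := Nat.le_of_succ_le_succ hk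
    simp only [BoundedFormula.realize_all]
    constructor
    · intro hall b'
      obtain ⟨a', ha'⟩ := h.symm.exists_snoc b'
      exact (ih ha'.symm hf v w).mp (hall a')
    · intro hall a'
      obtain ⟨b', hb'⟩ := h.exists_snoc a'
      exact (ih hb' hf v w).mpr (hall b')

end ThresholdEquiv

theorem threshold_indistinguishability_general
    {A B : Type} [Fintype A] [Fintype B]
    (PA QA : Set A) (PB QB : Set B) (r : ℕ)
    (h₁ : min {a | a ∈ PA ∧ a ∈ QA}.ncard r = min {b | b ∈ PB ∧ b ∈ QB}.ncard r)
    (h₂ : min {a | a ∈ PA ∧ a ∉ QA}.ncard r = min {b | b ∈ PB ∧ b ∉ QB}.ncard r)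
    (h₃ : min {a | a ∉ PA ∧ a ∈ QA}.ncard r = min {b | b ∉ PB ∧ b ∈ QB}.ncard r)
    (h₄ : min {a | a ∉ PA ∧ a ∉ QA}.ncard r = min {b | b ∉ PB ∧ b ∉ QB}.ncard r) :
    ∀ φ : Lpq.Sentence, qrank φ ≤ r →
      (@Sentence.Realize Lpq A (pqStructure PA QA) φ ↔
        @Sentence.Realize Lpq B (pqStructure PB QB) φ) := by
  intro φ hφ
  have hregions : ∀ s t : Prop,
      min (pqRegion PA QA s t).encard r = min (pqRegion PB QB s t).encard r := by
    intro s t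
    apply min_encard_eq_of_min_ncard_eq
    by_cases hs : s <;> by_cases ht : t <;>
      simp only [pqRegion, hs, ht, iff_true, iff_false] <;> assumption
  exact (thresholdEquiv_fin_zero default default hregions).realize_iff φ hφ default default

/-- **Threshold indistinguishability for monadic FO with two unary predicates.**
Let `𝔄` (domain `A`, interpretations `PA`, `QA`) and `𝔅` (domain `B`,
interpretations `PB`, `QB`) be finite nonempty structures.  If for some `r` the
cardinalities of the four atomic-type regions `p∧q`, `p∧¬q`, `¬p∧q`, `¬p∧¬q` agree
up to threshold `r`, then `𝔄` and `𝔅` satisfy the same sentences of quantifier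
rank at most `r`. -/
theorem threshold_indistinguishability
    {A B : Type} [Fintype A] [Fintype B] [Nonempty A] [Nonempty B]
    (PA QA : Set A) (PB QB : Set B) (r : ℕ)
    (h₁ : min {a | a ∈ PA ∧ a ∈ QA}.ncard r = min {b | b ∈ PB ∧ b ∈ QB}.ncard r)
    (h₂ : min {a | a ∈ PA ∧ a ∉ QA}.ncard r = min {b | b ∈ PB ∧ b ∉ QB}.ncard r)
    (h₃ : min {a | a ∉ PA ∧ a ∈ QA}.ncard r = min {b | b ∉ PB ∧ b ∈ QB}.ncard r)
    (h₄ : min {a | a ∉ PA ∧ a ∉ QA}.ncard r = min {b | b ∉ PB ∧ b ∉ QB}.ncard r) :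
    ∀ φ : Lpq.Sentence, qrank φ ≤ r →
      (@Sentence.Realize Lpq A (pqStructure PA QA) φ ↔
        @Sentence.Realize Lpq B (pqStructure PB QB) φ) :=
  threshold_indistinguishability_general PA QA PB QB r h₁ h₂ h₃ h₄
end
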